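/- With the Bedford-McMullen setup, let $\underline{p}_D = (1/D)_{(a,b)\in Q}$, $\underline{p}_R = (1/(T_a R))_{(a,b)\in Q}$ and $\underline{p}_d = \left(T_a^{1/\tau - 1} / \sum_{a'\in S} T_{a'}^{1/\tau}\right)_{(a,b)\in Q}$ with $\tau > 1$. Then $h_r(\underline{p}_D) \leq h_r(\underline{p}_d) \leq h_r(\underline{p}_R) = \log R$ and $h(\underline{p}_R) \leq h(\underline{p}_d) \leq h(\underline{p}_D) = \log D$, with all inequalities being equalities if and only if all $T_a$ are equal. -/

import Mathlib

/-!
Each of the three measures is uniform on every row `{a} × P a`, with row weights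
`w_t a = T_a ^ t / ∑ T_{a'} ^ t` (`tilt T t`) for `t = 1, 1/τ, 0`, giving `p_D`, `p_d`, `p_R`.
For such a measure `h_r` is the entropy `H(w_t)` of the row weights and
`h = H(w_t) + E_{w_t}[log T]`. Since `log w_t` is affine in `log T`, Gibbs' inequality against
`w_t` gives `H(w_{t'}) ≤ log Z_t - t E_{w_{t'}}[log T]`, and Chebyshev's sum inequality makes the
tilted mean `E_{w_t}[log T]` nondecreasing in `t`. Together, `t ↦ H(w_t)` is antitone on `t ≥ 0`
and `t ↦ H(w_t) + E_{w_t}[log T]` is monotone on `t ≤ 1`. If `H(w_{1/τ}) = H(w_0) = log R`, the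
strict Gibbs inequality forces `w_{1/τ}` to be uniform, i.e. all `T_a` are equal.
-/

open Real Finset

lemma mul_log_sub_mul_log_lt {x y : ℝ} (hx : 0 < x) (hy : 0 < y) (hxy : x ≠ y) :
    x * log y - x * log x < y - x := by
  have hlog : log (y / x) < y / x - 1 :=
    log_lt_sub_one_of_pos (div_pos hy hx) (by rwa [ne_eq, div_eq_one_iff_eq hx.ne', eq_comm])
  calc x * log y - x * log x = x * log (y / x) := by rw [log_div hy.ne' hx.ne']; ring
    _ < x * (y / x - 1) := mul_lt_mul_of_pos_left hlog hx
    _ = y - x := by field_simp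

lemma mul_log_sub_mul_log_le {x y : ℝ} (hx : 0 < x) (hy : 0 < y) :
    x * log y - x * log x ≤ y - x := by
  rcases eq_or_ne x y with rfl | hxy
  · simp
  · exact (mul_log_sub_mul_log_lt hx hy hxy).le

lemma Monovary.sum_mul_sum_le_sum_mul_sum_weighted {ι : Type*} [Fintype ι] {w f g : ι → ℝ}
    (hfg : Monovary f g) (hw : ∀ i, 0 ≤ w i) :
    (∑ i, w i * f i) * (∑ i, w i * g i) ≤ (∑ i, w i) * ∑ i, w i * (f i * g i) := by
  have hdouble : 0 ≤ ∑ i, ∑ j, w i * w j * ((f i - f j) * (g i - g j)) :=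
    sum_nonneg fun i _ => sum_nonneg fun j _ =>
      mul_nonneg (mul_nonneg (hw i) (hw j)) (hfg.sub_mul_sub_nonneg j i)
  have hexpand : ∑ i, ∑ j, w i * w j * ((f i - f j) * (g i - g j)) =
      2 * ((∑ i, w i) * (∑ i, w i * (f i * g i)) - (∑ i, w i * f i) * ∑ i, w i * g i) := by
    simp_rw [show ∀ i j, w i * w j * ((f i - f j) * (g i - g j)) =
        w i * (f i * g i) * w j + w i * (w j * (f j * g j)) - w i * f i * (w j * g j)
          - w i * g i * (w j * f j) from fun i j => by ring,
      sum_sub_distrib, sum_add_distrib, ← mul_sum, ← sum_mul]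
    ring
  linarith

section Entropy

variable {ι : Type*} [Fintype ι]

noncomputable def entropy (w : ι → ℝ) : ℝ := -∑ i, w i * log (w i)

lemma entropy_le_neg_sum_mul_log {w v : ι → ℝ} (hw : ∀ i, 0 < w i) (hv : ∀ i, 0 < v i)
    (hw1 : ∑ i, w i = 1) (hv1 : ∑ i, v i = 1) : entropy w ≤ -∑ i, w i * log (v i) := by
  have := sum_le_sum fun i (_ : i ∈ univ) => mul_log_sub_mul_log_le (hw i) (hv i)
  rw [sum_sub_distrib, sum_sub_distrib, hw1, hv1] at this
  rw [entropy]
  linarith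

lemma entropy_lt_neg_sum_mul_log {w v : ι → ℝ} (hw : ∀ i, 0 < w i) (hv : ∀ i, 0 < v i)
    (hw1 : ∑ i, w i = 1) (hv1 : ∑ i, v i = 1) (hwv : w ≠ v) :
    entropy w < -∑ i, w i * log (v i) := by
  obtain ⟨i, hi⟩ := Function.ne_iff.1 hwv
  have := sum_lt_sum (fun i (_ : i ∈ univ) => mul_log_sub_mul_log_le (hw i) (hv i))
    ⟨i, mem_univ i, mul_log_sub_mul_log_lt (hw i) (hv i) hi⟩
  rw [sum_sub_distrib, sum_sub_distrib, hw1, hv1] at this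
  rw [entropy]
  linarith

lemma entropy_const_inv_card [Nonempty ι] :
    entropy (fun _ : ι => (Fintype.card ι : ℝ)⁻¹) = log (Fintype.card ι) := by
  have hcard : (Fintype.card ι : ℝ) ≠ 0 := Nat.cast_ne_zero.2 Fintype.card_ne_zero
  simp only [entropy, sum_const, card_univ, nsmul_eq_mul, log_inv]
  field_simp

end Entropy

section Tilt

variable {ι : Type*} [Fintype ι] {T : ι → ℝ}

noncomputable def tilt (T : ι → ℝ) (t : ℝ) (i : ι) : ℝ := T i ^ t / ∑ j, T j ^ t

lemma tilt_zero (T : ι → ℝ) : tilt T 0 = fun _ => (Fintype.card ι : ℝ)⁻¹ := by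
  ext i
  simp [tilt]

lemma tilt_const {c : ℝ} (hc : 0 < c) (t : ℝ) :
    tilt (fun _ : ι => c) t = fun _ => (Fintype.card ι : ℝ)⁻¹ := by
  ext i
  have : c ^ t ≠ 0 := (rpow_pos_of_pos hc t).ne'
  simp only [tilt, sum_const, card_univ, nsmul_eq_mul]
  field_simp

lemma sum_tilt_mul_log (t : ℝ) :
    ∑ i, tilt T t i * log (T i) = (∑ i, T i ^ t * log (T i)) / ∑ j, T j ^ t := by
  simp only [tilt, div_mul_eq_mul_div, sum_div]

variable [Nonempty ι]

lemma sum_rpow_pos (hT : ∀ i, 0 < T i) (t : ℝ) : 0 < ∑ j, T j ^ t :=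
  sum_pos (fun j _ => rpow_pos_of_pos (hT j) t) univ_nonempty

lemma tilt_pos (hT : ∀ i, 0 < T i) (t : ℝ) (i : ι) : 0 < tilt T t i :=
  div_pos (rpow_pos_of_pos (hT i) t) (sum_rpow_pos hT t)

lemma sum_tilt (hT : ∀ i, 0 < T i) (t : ℝ) : ∑ i, tilt T t i = 1 := by
  simp only [tilt, ← sum_div, div_self (sum_rpow_pos hT t).ne']

lemma neg_sum_mul_log_tilt (hT : ∀ i, 0 < T i) {w : ι → ℝ} (hw : ∑ i, w i = 1) (t : ℝ) :
    -∑ i, w i * log (tilt T t i) = log (∑ j, T j ^ t) - t * ∑ i, w i * log (T i) := by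
  simp only [tilt, log_div (rpow_pos_of_pos (hT _) t).ne' (sum_rpow_pos hT t).ne',
    log_rpow (hT _), mul_sub, sum_sub_distrib, ← sum_mul, hw, one_mul, mul_sum, mul_left_comm t]
  ring

lemma entropy_tilt (hT : ∀ i, 0 < T i) (t : ℝ) :
    entropy (tilt T t) = log (∑ j, T j ^ t) - t * ∑ i, tilt T t i * log (T i) :=
  neg_sum_mul_log_tilt hT (sum_tilt hT t) t

lemma monotone_sum_tilt_mul_log (hT : ∀ i, 0 < T i) :
    Monotone fun t => ∑ i, tilt T t i * log (T i) := by
  intro t t' htt'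
  have hmono : Monovary (fun i => log (T i)) (fun i => T i ^ (t' - t)) := by
    intro i j hij
    refine log_le_log (hT i) (le_of_lt ?_)
    by_contra! hji
    exact hij.not_ge (rpow_le_rpow (hT j).le hji (sub_nonneg.2 htt'))
  have hsplit : ∀ i, T i ^ t * T i ^ (t' - t) = T i ^ t' := fun i => by
    rw [← rpow_add (hT i), add_sub_cancel]
  have := hmono.sum_mul_sum_le_sum_mul_sum_weighted fun i => (rpow_pos_of_pos (hT i) t).le
  simp only [hsplit, ← mul_assoc, mul_right_comm _ (log _)] at this
  dsimp only
  rw [sum_tilt_mul_log, sum_tilt_mul_log,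
    div_le_div_iff₀ (sum_rpow_pos hT t) (sum_rpow_pos hT t')]
  linarith

lemma entropy_tilt_antitoneOn (hT : ∀ i, 0 < T i) :
    AntitoneOn (fun t => entropy (tilt T t)) (Set.Ici 0) := by
  intro t ht t' _ htt'
  calc entropy (tilt T t') ≤ -∑ i, tilt T t' i * log (tilt T t i) :=
        entropy_le_neg_sum_mul_log (tilt_pos hT t') (tilt_pos hT t) (sum_tilt hT t')
          (sum_tilt hT t)
    _ = log (∑ j, T j ^ t) - t * ∑ i, tilt T t' i * log (T i) :=
        neg_sum_mul_log_tilt hT (sum_tilt hT t') t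
    _ ≤ log (∑ j, T j ^ t) - t * ∑ i, tilt T t i * log (T i) :=
        sub_le_sub_left (mul_le_mul_of_nonneg_left (monotone_sum_tilt_mul_log hT htt') ht) _
    _ = entropy (tilt T t) := (entropy_tilt hT t).symm

lemma entropy_add_sum_tilt_mul_log_monotoneOn (hT : ∀ i, 0 < T i) :
    MonotoneOn (fun t => entropy (tilt T t) + ∑ i, tilt T t i * log (T i)) (Set.Iic 1) := by
  intro t _ t' ht' htt'
  calc entropy (tilt T t) + ∑ i, tilt T t i * log (T i)
      ≤ -∑ i, tilt T t i * log (tilt T t' i) + ∑ i, tilt T t i * log (T i) := by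
        gcongr
        exact entropy_le_neg_sum_mul_log (tilt_pos hT t) (tilt_pos hT t') (sum_tilt hT t)
          (sum_tilt hT t')
    _ = log (∑ j, T j ^ t') + (1 - t') * ∑ i, tilt T t i * log (T i) := by
        rw [neg_sum_mul_log_tilt hT (sum_tilt hT t)]
        ring
    _ ≤ log (∑ j, T j ^ t') + (1 - t') * ∑ i, tilt T t' i * log (T i) :=
        (add_le_add_iff_left _).2
          (mul_le_mul_of_nonneg_left (monotone_sum_tilt_mul_log hT htt') (sub_nonneg.2 ht'))
    _ = entropy (tilt T t') + ∑ i, tilt T t' i * log (T i) := by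
        rw [entropy_tilt hT]
        ring

lemma entropy_add_sum_tilt_one_mul_log (hT : ∀ i, 0 < T i) :
    entropy (tilt T 1) + ∑ i, tilt T 1 i * log (T i) = log (∑ i, T i) := by
  simp only [entropy_tilt hT, rpow_one]
  ring

lemma eq_of_entropy_tilt_eq_entropy_tilt_zero (hT : ∀ i, 0 < T i) {t : ℝ} (ht : t ≠ 0)
    (h : entropy (tilt T t) = entropy (tilt T 0)) (i j : ι) : T i = T j := by
  have htilt : tilt T t = tilt T 0 := by
    by_contra hne
    have hlt := entropy_lt_neg_sum_mul_log (tilt_pos hT t) (tilt_pos hT 0) (sum_tilt hT t)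
      (sum_tilt hT 0) hne
    rw [neg_sum_mul_log_tilt hT (sum_tilt hT t), zero_mul, h, entropy_tilt hT 0, zero_mul] at hlt
    exact lt_irrefl _ hlt
  have hij : tilt T t i = tilt T t j := by simp [htilt, tilt_zero]
  rw [tilt, tilt, div_left_inj' (sum_rpow_pos hT t).ne'] at hij
  exact (rpow_left_inj (hT i).le (hT j).le ht).1 hij

end Tilt

section RowUniform

variable {S : Type*} {P : S → Type*} [∀ a, Fintype (P a)]

def rowSum (p : (Σ a, P a) → ℝ) (a : S) : ℝ := ∑ b, p ⟨a, b⟩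

variable (P) in
noncomputable def rowUniform (w : S → ℝ) : (Σ a, P a) → ℝ :=
  fun q => w q.1 / Fintype.card (P q.1)

@[simp]
lemma rowUniform_mk (w : S → ℝ) (a : S) (b : P a) :
    rowUniform P w ⟨a, b⟩ = w a / Fintype.card (P a) :=
  rfl

lemma rowSum_rowUniform [∀ a, Nonempty (P a)] (w : S → ℝ) : rowSum (rowUniform P w) = w := by
  ext a
  have : (Fintype.card (P a) : ℝ) ≠ 0 := Nat.cast_ne_zero.2 Fintype.card_ne_zero
  simp only [rowSum, rowUniform_mk, sum_const, card_univ, nsmul_eq_mul]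
  field_simp

lemma entropy_rowUniform [Fintype S] [∀ a, Nonempty (P a)] (w : S → ℝ) :
    entropy (rowUniform P w) = entropy w + ∑ a, w a * log (Fintype.card (P a)) := by
  have hrow : ∀ a, ∑ b : P a, rowUniform P w ⟨a, b⟩ * log (rowUniform P w ⟨a, b⟩) =
      w a * log (w a) - w a * log (Fintype.card (P a)) := fun a => by
    have hcard : (Fintype.card (P a) : ℝ) ≠ 0 := Nat.cast_ne_zero.2 Fintype.card_ne_zero
    simp only [rowUniform_mk, sum_const, card_univ, nsmul_eq_mul]
    rcases eq_or_ne (w a) 0 with hw | hw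
    · simp [hw]
    · rw [log_div hw hcard]
      field_simp
  simp only [entropy, Fintype.sum_sigma, hrow, sum_sub_distrib]
  ring

end RowUniform

/-- Comparison of entropy and row-entropy of the three distinguished measures
`p_D` (uniform), `p_R` (maximal row entropy), `p_d` (maximal dimension):
`h_r(p_D) ≤ h_r(p_d) ≤ h_r(p_R) = log R` and `h(p_R) ≤ h(p_d) ≤ h(p_D) = log D`,
and all these inequalities are equalities iff all `T_a` are equal. -/
theorem stmt8 (S : Type*) [Fintype S] [Nonempty S] (P : S → Type*) [∀ a, Fintype (P a)]
    [∀ a, Nonempty (P a)] (τ : ℝ) (hτ : 1 < τ) :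
    let R : ℝ := Fintype.card S
    let D : ℝ := Fintype.card (Σ a : S, P a)
    let T : S → ℝ := fun a => Fintype.card (P a)
    let pD : (Σ a : S, P a) → ℝ := fun _ => 1 / D
    let pR : (Σ a : S, P a) → ℝ := fun q => 1 / (T q.1 * R)
    let pd : (Σ a : S, P a) → ℝ := fun q => T q.1 ^ (1 / τ - 1) / ∑ a' : S, T a' ^ (1 / τ)
    let h : ((Σ a : S, P a) → ℝ) → ℝ := fun p => -∑ q : (Σ a : S, P a), p q * Real.log (p q)
    let hr : ((Σ a : S, P a) → ℝ) → ℝ := fun p =>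
      -∑ a : S, (∑ b : P a, p ⟨a, b⟩) * Real.log (∑ b : P a, p ⟨a, b⟩)
    hr pD ≤ hr pd ∧ hr pd ≤ hr pR ∧ hr pR = Real.log R ∧
      h pR ≤ h pd ∧ h pd ≤ h pD ∧ h pD = Real.log D ∧
      ((hr pD = hr pd ∧ hr pd = hr pR ∧ h pR = h pd ∧ h pd = h pD) ↔
        ∀ a a' : S, Fintype.card (P a) = Fintype.card (P a')) := by
  intro R D T pD pR pd h hr
  have hT : ∀ a, 0 < T a := fun a => Nat.cast_pos.2 Fintype.card_pos
  have hD : D = ∑ a, T a := by simp [D, T, Fintype.card_sigma]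
  have hpD : pD = rowUniform P (tilt T 1) := by
    ext ⟨a, b⟩
    simp only [pD, rowUniform_mk, tilt, rpow_one, hD, T]
    field_simp
  have hpR : pR = rowUniform P (tilt T 0) := by
    ext ⟨a, b⟩
    simp only [pR, rowUniform_mk, tilt_zero, T, R]
    field_simp
  have hpd : pd = rowUniform P (tilt T (1 / τ)) := by
    ext ⟨a, b⟩
    simp only [pd, rowUniform_mk, tilt, rpow_sub_one (hT a).ne']
    ring
  have hhr : ∀ w, hr (rowUniform P w) = entropy w := fun w =>
    congrArg entropy (rowSum_rowUniform w)
  have hh : ∀ w, h (rowUniform P w) = entropy w + ∑ a, w a * log (T a) := entropy_rowUniform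
  have hs : (1 / τ : ℝ) ∈ Set.Icc 0 1 :=
    ⟨by positivity, (div_le_one (by linarith)).2 hτ.le⟩
  rw [hpD, hpR, hpd, hhr, hhr, hhr, hh, hh, hh]
  refine ⟨entropy_tilt_antitoneOn hT hs.1 (Set.mem_Ici.2 zero_le_one) hs.2,
    entropy_tilt_antitoneOn hT Set.self_mem_Ici hs.1 hs.1,
    by rw [tilt_zero, entropy_const_inv_card],
    entropy_add_sum_tilt_mul_log_monotoneOn hT (hs.1.trans hs.2) hs.2 hs.1,
    entropy_add_sum_tilt_mul_log_monotoneOn hT hs.2 Set.self_mem_Iic hs.2,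
    by rw [entropy_add_sum_tilt_one_mul_log hT, hD], ?_, ?_⟩
  · rintro ⟨-, heq, -, -⟩ a a'
    exact Nat.cast_injective (eq_of_entropy_tilt_eq_entropy_tilt_zero hT (by positivity) heq a a')
  · intro hall
    obtain ⟨a₀⟩ := ‹Nonempty S›
    have hTc : T = fun _ => T a₀ := funext fun a => congrArg Nat.cast (hall a a₀)
    rw [hTc, tilt_const (hT a₀), tilt_const (hT a₀), tilt_const (hT a₀)]
    exact ⟨rfl, rfl, rfl, rfl⟩
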